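/- arXiv:1311.4825 — 2 statements merged into one kernel-verified Lean document; each statement's English description precedes it below -/
import Mathlib

section
/- Let K_{T+1} be the (T+1)×(T+1) kernel matrix extending K_T by one point, both PSD, and σ > 0. Then (1/2)log det(I + σ⁻²K_{T+1}) − (1/2)log det(I + σ⁻²K_T) = (1/2)log(1 + σ⁻² σ²_{T+1}(x_{T+1})), where σ²_{T+1}(x_{T+1}) = k(x_{T+1},x_{T+1}) − k_T(x_{T+1})ᵀ(K_T+σ²I)⁻¹k_T(x_{T+1}). -/
/-!
`K_{T+1} + σ²I` is the block matrix with top-left block `K_T + σ²I`, border `k_T(x_{T+1})`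
and corner `κ + σ²`, so by the Schur complement formula
`det (K_{T+1} + σ²I) = det (K_T + σ²I) · (σ² + σ²_{T+1}(x_{T+1}))`.
Since `I + σ⁻²K = σ⁻² (K + σ²I)`, the ratio of the two determinants in the statement is
`σ⁻² (σ² + σ²_{T+1}(x_{T+1})) = 1 + σ⁻² σ²_{T+1}(x_{T+1})`, and the claim is its logarithm.
-/

open Matrix

namespace Matrix

variable {α : Type*} [CommRing α] {n : ℕ}

theorem det_succ_eq_det_mul_schur (M : Matrix (Fin (n + 1)) (Fin (n + 1)) α)
    (hA : IsUnit (M.submatrix Fin.castSucc Fin.castSucc).det) :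
    M.det = (M.submatrix Fin.castSucc Fin.castSucc).det *
      (M (Fin.last n) (Fin.last n) - (fun j => M (Fin.last n) j.castSucc) ⬝ᵥ
        ((M.submatrix Fin.castSucc Fin.castSucc)⁻¹ *ᵥ fun i => M i.castSucc (Fin.last n))) := by
  set A := M.submatrix Fin.castSucc Fin.castSucc
  have : Invertible A := invertibleOfIsUnitDet _ hA
  have hlast (k : Fin 1) : finSumFinEquiv (Sum.inr k) = Fin.last n := by
    rw [Fin.fin_one_eq_zero k]; rfl
  have hblocks : M.submatrix finSumFinEquiv finSumFinEquiv =
      fromBlocks A (replicateCol (Fin 1) fun i => M i.castSucc (Fin.last n))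
        (replicateRow (Fin 1) fun j => M (Fin.last n) j.castSucc)
        (of fun _ _ => M (Fin.last n) (Fin.last n)) := by
    ext (i | i) (j | j) <;> simp [A, hlast] <;> rfl
  rw [← det_submatrix_equiv_self finSumFinEquiv M, hblocks, det_fromBlocks₁₁, det_fin_one,
    invOf_eq_nonsing_inv, Matrix.mul_assoc, ← replicateCol_mulVec,
    replicateRow_mul_replicateCol]
  rfl

theorem IsSymm.det_add_smul_one_succ {K : Matrix (Fin (n + 1)) (Fin (n + 1)) α} (hK : K.IsSymm)
    (s : α) (hunit : IsUnit (K.submatrix Fin.castSucc Fin.castSucc + s • 1).det) :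
    let k : Fin n → α := fun i => K (Fin.last n) i.castSucc
    det (K + s • 1) = det (K.submatrix Fin.castSucc Fin.castSucc + s • 1) *
      (s + (K (Fin.last n) (Fin.last n) -
        k ⬝ᵥ ((K.submatrix Fin.castSucc Fin.castSucc + s • 1)⁻¹ *ᵥ k))) := by
  intro k
  have hsub : (K + s • 1).submatrix Fin.castSucc Fin.castSucc =
      K.submatrix Fin.castSucc Fin.castSucc + s • 1 := by
    ext i j
    simp [one_apply]
  have hrow : (fun j => (K + s • 1) (Fin.last n) j.castSucc) = k := by
    ext j
    simp [k, (Fin.castSucc_ne_last j).symm]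
  have hcol : (fun i => (K + s • 1) i.castSucc (Fin.last n)) = k := by
    ext i
    simp [k, hK.apply, Fin.castSucc_ne_last i]
  rw [det_succ_eq_det_mul_schur _ (hsub ▸ hunit), hsub, hrow, hcol,
    Matrix.add_apply, Matrix.smul_apply, one_apply_eq, smul_eq_mul, mul_one]
  ring

theorem det_one_add_inv_smul {K ι : Type*} [Field K] [Fintype ι] [DecidableEq ι]
    (A : Matrix ι ι K) {s : K} (hs : s ≠ 0) :
    det (1 + s⁻¹ • A) = s⁻¹ ^ Fintype.card ι * det (A + s • 1) := by
  rw [← det_smul, smul_add, smul_smul, inv_mul_cancel₀ hs, one_smul, add_comm]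

theorem PosSemidef.det_one_add_smul_pos {ι : Type*} [Fintype ι] [DecidableEq ι]
    {K : Matrix ι ι ℝ} (hK : K.PosSemidef) {c : ℝ} (hc : 0 ≤ c) : 0 < det (1 + c • K) :=
  (PosDef.one.add_posSemidef (hK.smul hc)).det_pos

end Matrix

theorem information_chain_rule (T : ℕ) (Kbig : Matrix (Fin (T + 1)) (Fin (T + 1)) ℝ)
    (hK : Kbig.PosSemidef) (σ : ℝ) (hσ : 0 < σ) :
    let Ksmall : Matrix (Fin T) (Fin T) ℝ :=
      Kbig.submatrix Fin.castSucc Fin.castSucc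
    let kvec : Fin T → ℝ := fun i => Kbig (Fin.last T) i.castSucc
    let κ : ℝ := Kbig (Fin.last T) (Fin.last T)
    (1 / 2) * Real.log (Matrix.det (1 + (σ ^ 2)⁻¹ • Kbig)) -
        (1 / 2) * Real.log (Matrix.det (1 + (σ ^ 2)⁻¹ • Ksmall)) =
      (1 / 2) * Real.log (1 + (σ ^ 2)⁻¹ *
        (κ - kvec ⬝ᵥ ((Ksmall + σ ^ 2 • (1 : Matrix (Fin T) (Fin T) ℝ))⁻¹ *ᵥ kvec))) := by
  intro Ksmall kvec κ
  have hs : 0 < σ ^ 2 := by positivity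
  have hKsmall : Ksmall.PosSemidef := hK.submatrix _
  have hschur : det (Kbig + σ ^ 2 • 1) = det (Ksmall + σ ^ 2 • 1) *
      (σ ^ 2 + (κ - kvec ⬝ᵥ ((Ksmall + σ ^ 2 • 1)⁻¹ *ᵥ kvec))) :=
    (isHermitian_iff_isSymm.1 hK.isHermitian).det_add_smul_one_succ _
      (PosDef.posSemidef_add hKsmall (PosDef.one.smul hs)).det_pos.ne'.isUnit
  have hratio : det (1 + (σ ^ 2)⁻¹ • Kbig) = det (1 + (σ ^ 2)⁻¹ • Ksmall) *
      (1 + (σ ^ 2)⁻¹ * (κ - kvec ⬝ᵥ ((Ksmall + σ ^ 2 • 1)⁻¹ *ᵥ kvec))) := by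
    rw [det_one_add_inv_smul _ hs.ne', det_one_add_inv_smul _ hs.ne', hschur,
      Fintype.card_fin, Fintype.card_fin, pow_succ]
    linear_combination ((σ ^ 2)⁻¹ ^ T * det (Ksmall + σ ^ 2 • 1)) * inv_mul_cancel₀ hs.ne'
  have hsmall : det (1 + (σ ^ 2)⁻¹ • Ksmall) ≠ 0 :=
    (hKsmall.det_one_add_smul_pos (inv_nonneg.2 hs.le)).ne'
  rw [← mul_sub, ← Real.log_div (hK.det_one_add_smul_pos (inv_nonneg.2 hs.le)).ne' hsmall,
    hratio, mul_div_cancel_left₀ _ hsmall]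
end

section
/- Let σ > 0 and let (s_t)_{t=1}^T be reals in [0,1]. Then ∑_{t=1}^T s_t ≤ C₁ · (1/2)∑_{t=1}^T log(1 + σ⁻² s_t), where C₁ = 2/log(1+σ⁻²). -/
/-! Bernoulli's inequality `(1 + a) ^ p ≤ 1 + p a` for `p ∈ [0, 1]` gives, after taking logarithms,
`p log (1 + a) ≤ log (1 + a p)`; summing over the `s_t` and dividing by `log (1 + σ⁻²) > 0` yields
the bound. -/

open Finset Real

theorem mul_log_one_add_le_log_one_add_mul {a p : ℝ} (ha : -1 < a) (hp₀ : 0 ≤ p) (hp₁ : p ≤ 1) :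
    p * log (1 + a) ≤ log (1 + a * p) := by
  have hpos : 0 < 1 + a := by linarith
  have bernoulli : (1 + a) ^ p ≤ 1 + a * p := by
    simpa [mul_comm] using rpow_one_add_le_one_add_mul_self ha.le hp₀ hp₁
  calc p * log (1 + a) = log ((1 + a) ^ p) := (log_rpow hpos p).symm
    _ ≤ log (1 + a * p) := log_le_log (rpow_pos_of_pos hpos p) bernoulli

theorem log_one_add_mul_sum_le_sum_log_one_add_mul {ι : Type*} (I : Finset ι) {a : ℝ}
    (ha : -1 < a) {x : ι → ℝ} (hx : ∀ i ∈ I, x i ∈ Set.Icc (0 : ℝ) 1) :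
    log (1 + a) * ∑ i ∈ I, x i ≤ ∑ i ∈ I, log (1 + a * x i) := by
  rw [mul_sum]
  refine sum_le_sum fun i hi => ?_
  obtain ⟨hx₀, hx₁⟩ := hx i hi
  simpa [mul_comm] using mul_log_one_add_le_log_one_add_mul ha hx₀ hx₁

theorem summed_info_bound (T : ℕ) (σ : ℝ) (hσ : 0 < σ) (s : ℕ → ℝ)
    (hs : ∀ t, 1 ≤ t → t ≤ T → s t ∈ Set.Icc (0:ℝ) 1) :
    ∑ t ∈ Finset.Icc 1 T, s t ≤
      2 / Real.log (1 + (σ ^ 2)⁻¹) *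
        ((1 / 2) * ∑ t ∈ Finset.Icc 1 T, Real.log (1 + (σ ^ 2)⁻¹ * s t)) := by
  have ha : 0 < (σ ^ 2)⁻¹ := by positivity
  have hlog : 0 < log (1 + (σ ^ 2)⁻¹) := log_pos (by linarith)
  have hsum := log_one_add_mul_sum_le_sum_log_one_add_mul (Icc 1 T) (by linarith : -1 < (σ ^ 2)⁻¹)
    fun t ht => hs t (mem_Icc.1 ht).1 (mem_Icc.1 ht).2
  rw [← mul_assoc, div_mul_eq_mul_div, mul_one_div_cancel two_ne_zero, one_div, ← div_eq_inv_mul,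
    le_div_iff₀ hlog]
  linarith
end
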